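/- arXiv:1505.07915 — 2 statements merged into one kernel-verified Lean document; each statement's English description precedes it below -/
import Mathlib

section
/- Let X be a Gamma(p, θ) random variable with density f(x) = x^{p-1} e^{-x/θ} / (θ^p Γ(p)) for x > 0, and let u : ℝ → ℝ be a measurable function with E[|u(X)|] < ∞ and ∫_0^x u(t) t^{p-1} dt finite for all x > 0. Define ν(x) = x^{-(p-1)} ∫_0^x u(t) t^{p-1} dt. Then E[ν(X)] = θ · E[u(X)]. -/
/-!
Write the Gamma density on `(0, ∞)` as `C⁻¹ x ^ (p - 1) e ^ (-x / θ)` with `C = θ ^ p Γ(p)`. The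
factor `x ^ (-(p - 1))` in `ν` cancels `x ^ (p - 1)`, so `E ν(X) = C⁻¹ ∫₀^∞ e ^ (-x / θ) ∫₀^x f`
with `f t = u t t ^ (p - 1)`. Exchanging the order of integration (Tonelli for `|f|` is exactly
`E |u(X)| < ∞`) replaces the weight by its tail `∫_t^∞ e ^ (-x / θ) dx = θ e ^ (-t / θ)`, and
`C⁻¹ f(t) θ e ^ (-t / θ)` is `θ` times the integrand of `E u(X)`.
-/

open MeasureTheory Real Set

theorem setIntegral_Ioi_indicator_Ici_mul_const {g : ℝ → ℝ} {a t : ℝ} (ht : a < t) (c : ℝ) :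
    ∫ x in Ioi a, (Ici t).indicator (fun x => g x * c) x = (∫ x in Ioi t, g x) * c := by
  rw [setIntegral_indicator measurableSet_Ici, inter_eq_right.2 (Ici_subset_Ioi.2 ht),
    integral_mul_const, integral_Ici_eq_integral_Ioi]

section FubiniTail

variable {f g : ℝ → ℝ} {a : ℝ}

theorem indicator_le_mul_apply_snd (x t : ℝ) :
    {q : ℝ × ℝ | q.2 ≤ q.1}.indicator (fun q => g q.1 * f q.2) (x, t) =
      (Ici t).indicator (fun x => g x * f t) x := by
  simp [indicator_apply]

theorem integrable_indicator_le_mul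
    (hf : AEStronglyMeasurable f (volume.restrict (Ioi a)))
    (hg : IntegrableOn g (Ioi a)) (hg_nonneg : ∀ x, a < x → 0 ≤ g x)
    (hfg : IntegrableOn (fun t => f t * ∫ x in Ioi t, g x) (Ioi a)) :
    Integrable ({q : ℝ × ℝ | q.2 ≤ q.1}.indicator fun q => g q.1 * f q.2)
      ((volume.restrict (Ioi a)).prod (volume.restrict (Ioi a))) := by
  set H : ℝ × ℝ → ℝ := {q | q.2 ≤ q.1}.indicator fun q => g q.1 * f q.2 with hH
  have hH_meas :
      AEStronglyMeasurable H ((volume.restrict (Ioi a)).prod (volume.restrict (Ioi a))) :=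
    (hg.aestronglyMeasurable.comp_fst.mul hf.comp_snd).indicator
      (measurableSet_le measurable_snd measurable_fst)
  refine (integrable_prod_iff' hH_meas).2 ⟨ae_of_all _ fun t => ?_, ?_⟩
  · simp only [hH, indicator_le_mul_apply_snd]
    exact (hg.mul_const _).indicator measurableSet_Ici
  · refine hfg.norm.congr ?_
    filter_upwards [self_mem_ae_restrict measurableSet_Ioi] with t ht
    have norm_section : ∀ x ∈ Ioi a, ‖H (x, t)‖ = (Ici t).indicator (fun x => g x * |f t|) x := by
      intro x hx
      rw [hH, indicator_le_mul_apply_snd]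
      by_cases hxt : x ∈ Ici t <;> simp [hxt, abs_of_nonneg (hg_nonneg x hx)]
    rw [setIntegral_congr_fun measurableSet_Ioi norm_section,
      setIntegral_Ioi_indicator_Ici_mul_const ht, norm_mul, Real.norm_eq_abs,
      Real.norm_of_nonneg (setIntegral_nonneg measurableSet_Ioi
        fun x hx => hg_nonneg x (ht.trans hx)), mul_comm]

theorem integral_Ioi_mul_intervalIntegral_eq
    (hf : AEStronglyMeasurable f (volume.restrict (Ioi a)))
    (hg : IntegrableOn g (Ioi a)) (hg_nonneg : ∀ x, a < x → 0 ≤ g x)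
    (hfg : IntegrableOn (fun t => f t * ∫ x in Ioi t, g x) (Ioi a)) :
    ∫ x in Ioi a, g x * ∫ t in a..x, f t = ∫ t in Ioi a, f t * ∫ x in Ioi t, g x := by
  set H : ℝ × ℝ → ℝ := {q | q.2 ≤ q.1}.indicator fun q => g q.1 * f q.2 with hH
  have section_fst (x : ℝ) (hx : a < x) :
      ∫ t in Ioi a, H (x, t) = g x * ∫ t in a..x, f t := by
    have H_section : (fun t => H (x, t)) = (Iic x).indicator fun t => g x * f t := by
      ext t; simp [hH, indicator_apply]
    rw [H_section, setIntegral_indicator measurableSet_Iic, Ioi_inter_Iic, integral_const_mul,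
      intervalIntegral.integral_of_le hx.le]
  calc ∫ x in Ioi a, g x * ∫ t in a..x, f t = ∫ x in Ioi a, ∫ t in Ioi a, H (x, t) :=
        setIntegral_congr_fun measurableSet_Ioi fun x hx => (section_fst x hx).symm
    _ = ∫ t in Ioi a, ∫ x in Ioi a, H (x, t) :=
        integral_integral_swap (integrable_indicator_le_mul hf hg hg_nonneg hfg)
    _ = ∫ t in Ioi a, f t * ∫ x in Ioi t, g x := by
        refine setIntegral_congr_fun measurableSet_Ioi fun t ht => ?_
        simp only [hH, indicator_le_mul_apply_snd]
        rw [setIntegral_Ioi_indicator_Ici_mul_const ht, mul_comm]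

end FubiniTail

theorem integrableOn_exp_neg_div_Ioi {θ : ℝ} (hθ : 0 < θ) (t : ℝ) :
    IntegrableOn (fun x => exp (-x / θ)) (Ioi t) := by
  simpa only [neg_div, neg_mul, div_eq_inv_mul, mul_neg] using
    integrableOn_exp_mul_Ioi (neg_neg_of_pos (inv_pos.2 hθ)) t

theorem integral_exp_neg_div_Ioi {θ : ℝ} (hθ : 0 < θ) (t : ℝ) :
    ∫ x in Ioi t, exp (-x / θ) = θ * exp (-t / θ) := by
  have := integral_exp_mul_Ioi (neg_neg_of_pos (inv_pos.2 hθ)) t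
  simp only [neg_mul, ← neg_div, inv_mul_eq_div] at this
  rw [this]
  field_simp

section withDensity

variable {α : Type*} [MeasurableSpace α] {μ : Measure α} {d : α → ℝ}

theorem integral_withDensity_ofReal (hd : AEMeasurable d μ) (hd_nonneg : 0 ≤ᵐ[μ] d)
    (h : α → ℝ) :
    ∫ x, h x ∂μ.withDensity (fun x => ENNReal.ofReal (d x)) = ∫ x, d x * h x ∂μ := by
  rw [integral_withDensity_eq_integral_toReal_smul₀ hd.ennreal_ofReal
    (ae_of_all _ fun _ => ENNReal.ofReal_lt_top)]
  refine integral_congr_ae ?_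
  filter_upwards [hd_nonneg] with x hx
  rw [ENNReal.toReal_ofReal hx, smul_eq_mul]

theorem integrable_withDensity_ofReal_iff (hd : AEMeasurable d μ) (hd_nonneg : 0 ≤ᵐ[μ] d)
    {h : α → ℝ} :
    Integrable h (μ.withDensity fun x => ENNReal.ofReal (d x)) ↔
      Integrable (fun x => d x * h x) μ := by
  rw [integrable_withDensity_iff_integrable_smul₀' hd.ennreal_ofReal
    (ae_of_all _ fun _ => ENNReal.ofReal_lt_top)]
  refine integrable_congr ?_
  filter_upwards [hd_nonneg] with x hx
  rw [ENNReal.toReal_ofReal hx, smul_eq_mul]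

end withDensity

noncomputable def gammaScaleDensity (p θ x : ℝ) : ℝ :=
  if 0 < x then x ^ (p - 1) * exp (-x / θ) / (θ ^ p * Gamma p) else 0

theorem measurable_gammaScaleDensity (p θ : ℝ) : Measurable (gammaScaleDensity p θ) :=
  Measurable.ite measurableSet_Ioi (by fun_prop) measurable_const

section gammaScaleDensity

variable {p θ : ℝ}

theorem gammaScaleDensity_of_pos {x : ℝ} (hx : 0 < x) :
    gammaScaleDensity p θ x = (θ ^ p * Gamma p)⁻¹ * (x ^ (p - 1) * exp (-x / θ)) := by
  rw [gammaScaleDensity, if_pos hx, div_eq_inv_mul]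

theorem gammaScaleDensity_nonneg (hp : 0 < p) (hθ : 0 < θ) (x : ℝ) :
    0 ≤ gammaScaleDensity p θ x := by
  unfold gammaScaleDensity
  split_ifs with hx
  · have := Gamma_pos_of_pos hp
    positivity
  · exact le_rfl

theorem integral_withDensity_gammaScaleDensity (hp : 0 < p) (hθ : 0 < θ) (h : ℝ → ℝ) :
    ∫ x, h x ∂volume.withDensity (fun x => ENNReal.ofReal (gammaScaleDensity p θ x)) =
      ∫ x in Ioi 0, gammaScaleDensity p θ x * h x := by
  rw [integral_withDensity_ofReal (measurable_gammaScaleDensity p θ).aemeasurable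
    (ae_of_all _ (gammaScaleDensity_nonneg hp hθ))]
  refine (setIntegral_eq_integral_of_forall_compl_eq_zero fun x hx => ?_).symm
  rw [gammaScaleDensity, if_neg (show ¬0 < x from hx), zero_mul]

theorem gammaScaleDensity_mul_rpow_neg_mul {x : ℝ} (hx : 0 < x) (c : ℝ) :
    gammaScaleDensity p θ x * (x ^ (-(p - 1)) * c) = (θ ^ p * Gamma p)⁻¹ * (exp (-x / θ) * c) := by
  have hx_rpow : x ^ (p - 1) * (x ^ (p - 1))⁻¹ = 1 :=
    mul_inv_cancel₀ (rpow_pos_of_pos hx (p - 1)).ne'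
  rw [gammaScaleDensity_of_pos hx, rpow_neg hx.le]
  linear_combination ((θ ^ p * Gamma p)⁻¹ * exp (-x / θ) * c) * hx_rpow

theorem mul_gammaScaleDensity_mul_eq_tail (hθ : 0 < θ) {t : ℝ} (ht : 0 < t) (c : ℝ) :
    θ * (gammaScaleDensity p θ t * c) =
      (θ ^ p * Gamma p)⁻¹ * (c * t ^ (p - 1) * ∫ x in Ioi t, exp (-x / θ)) := by
  rw [gammaScaleDensity_of_pos ht, integral_exp_neg_div_Ioi hθ]
  ring

theorem integrableOn_mul_rpow_mul_tail (hp : 0 < p) (hθ : 0 < θ) {u : ℝ → ℝ}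
    (hu : Integrable u (volume.withDensity fun x => ENNReal.ofReal (gammaScaleDensity p θ x))) :
    IntegrableOn (fun t => u t * t ^ (p - 1) * ∫ x in Ioi t, exp (-x / θ)) (Ioi 0) := by
  rw [integrable_withDensity_ofReal_iff (measurable_gammaScaleDensity p θ).aemeasurable
    (ae_of_all _ (gammaScaleDensity_nonneg hp hθ))] at hu
  have hC : θ ^ p * Gamma p ≠ 0 := (mul_pos (rpow_pos_of_pos hθ p) (Gamma_pos_of_pos hp)).ne'
  refine IntegrableOn.congr_fun ((hu.integrableOn.const_mul θ).const_mul (θ ^ p * Gamma p))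
    (fun t ht => ?_) measurableSet_Ioi
  rw [mul_gammaScaleDensity_mul_eq_tail hθ ht, mul_inv_cancel_left₀ hC]

end gammaScaleDensity

theorem robbins_gamma_general
    (p θ : ℝ) (hp : 0 < p) (hθ : 0 < θ)
    (μ : Measure ℝ)
    (hμ : μ = volume.withDensity (fun x =>
      ENNReal.ofReal (if 0 < x then x ^ (p - 1) * Real.exp (-x / θ) / (θ ^ p * Real.Gamma p) else 0)))
    (u : ℝ → ℝ) (hu_meas : Measurable u)
    (hu_int : Integrable u μ)
    (ν : ℝ → ℝ)
    (hν : ∀ x : ℝ, ν x = x ^ (-(p - 1)) * ∫ t in (0:ℝ)..x, u t * t ^ (p - 1)) :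
    ∫ x, ν x ∂μ = θ * ∫ x, u x ∂μ := by
  change μ = volume.withDensity fun x => ENNReal.ofReal (gammaScaleDensity p θ x) at hμ
  have integral_μ (h : ℝ → ℝ) : ∫ x, h x ∂μ = ∫ x in Ioi 0, gammaScaleDensity p θ x * h x := by
    rw [hμ, integral_withDensity_gammaScaleDensity hp hθ]
  calc ∫ x, ν x ∂μ = ∫ x in Ioi 0, gammaScaleDensity p θ x * ν x := integral_μ ν
    _ = (θ ^ p * Gamma p)⁻¹ *
          ∫ x in Ioi 0, exp (-x / θ) * ∫ t in 0..x, u t * t ^ (p - 1) := by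
        rw [← integral_const_mul]
        refine setIntegral_congr_fun measurableSet_Ioi fun x hx => ?_
        rw [hν, gammaScaleDensity_mul_rpow_neg_mul hx]
    _ = (θ ^ p * Gamma p)⁻¹ *
          ∫ t in Ioi 0, u t * t ^ (p - 1) * ∫ x in Ioi t, exp (-x / θ) := by
        rw [integral_Ioi_mul_intervalIntegral_eq (by fun_prop) (integrableOn_exp_neg_div_Ioi hθ 0)
          (fun x _ => (exp_pos _).le) (integrableOn_mul_rpow_mul_tail hp hθ (hμ ▸ hu_int))]
    _ = θ * ∫ x in Ioi 0, gammaScaleDensity p θ x * u x := by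
        rw [← integral_const_mul, ← integral_const_mul]
        exact setIntegral_congr_fun measurableSet_Ioi fun t ht =>
          (mul_gammaScaleDensity_mul_eq_tail hθ ht (u t)).symm
    _ = θ * ∫ x, u x ∂μ := by rw [integral_μ u]

/-- Robbins U-V identity for the Gamma(p, θ) family. -/
theorem robbins_gamma
    (p θ : ℝ) (hp : 0 < p) (hθ : 0 < θ)
    (μ : Measure ℝ)
    (hμ : μ = volume.withDensity (fun x =>
      ENNReal.ofReal (if 0 < x then x ^ (p - 1) * Real.exp (-x / θ) / (θ ^ p * Real.Gamma p) else 0)))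
    (u : ℝ → ℝ) (hu_meas : Measurable u)
    (hu_int : Integrable u μ)
    (hfin : ∀ x : ℝ, 0 < x → IntervalIntegrable (fun t => u t * t ^ (p - 1)) volume 0 x)
    (ν : ℝ → ℝ)
    (hν : ∀ x : ℝ, ν x = x ^ (-(p - 1)) * ∫ t in (0:ℝ)..x, u t * t ^ (p - 1)) :
    ∫ x, ν x ∂μ = θ * ∫ x, u x ∂μ :=
  robbins_gamma_general p θ hp hθ μ hμ u hu_meas hu_int ν hν
end

section
/- The double integral ∫_{−∞}^∞ ∫_{−∞}^∞ [min(Φ(x), Φ(y)) − Φ(x)Φ(y)] dx dy equals 1, where Φ is the standard normal cdf. -/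
open MeasureTheory ProbabilityTheory Real Filter Set Topology

/-!
For fixed `x` the integrand in `y` is `(1 - Φ x) Φ y` for `y ≤ x` and `Φ x (1 - Φ y)`
for `y > x`. Since `φ' t = -t φ t`, the functions `y Φ y + φ y` and `y (1 - Φ y) - φ y` are
antiderivatives of `Φ` and `1 - Φ` vanishing at `-∞` resp. `+∞` (by Mills' inequality
`y (1 - Φ y) ≤ φ y`), so the two pieces add up to `φ x`, and the outer integral is `∫ φ = 1`.
-/

theorem integrableOn_Iic_comp_neg {E : Type*} [NormedAddCommGroup E] {f : ℝ → E} {a : ℝ}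
    (hf : IntegrableOn f (Ioi (-a))) :
    IntegrableOn (fun x => f (-x)) (Iic a) := by
  rw [← integrableOn_Ici_iff_integrableOn_Ioi] at hf
  have h := ((Measure.measurePreserving_neg (volume : Measure ℝ)).integrableOn_comp_preimage
    (Homeomorph.neg ℝ).measurableEmbedding).2 hf
  simpa [Function.comp_def] using h

theorem integral_min_sub_mul_of_monotone {F : ℝ → ℝ} (hF : Monotone F) (x : ℝ)
    (hIic : IntegrableOn F (Iic x)) (hIoi : IntegrableOn (fun y => 1 - F y) (Ioi x)) :
    ∫ y, (min (F x) (F y) - F x * F y) =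
      (1 - F x) * (∫ y in Iic x, F y) + F x * ∫ y in Ioi x, (1 - F y) := by
  have hle : EqOn (fun y => min (F x) (F y) - F x * F y) (fun y => (1 - F x) * F y) (Iic x) :=
    fun y hy => by simp only [min_eq_right (hF hy)]; ring
  have hgt : EqOn (fun y => min (F x) (F y) - F x * F y) (fun y => F x * (1 - F y)) (Ioi x) :=
    fun y hy => by simp only [min_eq_left (hF (le_of_lt hy))]; ring
  rw [← intervalIntegral.integral_Iic_add_Ioi
      (IntegrableOn.congr_fun (hIic.const_mul _) hle.symm measurableSet_Iic)
      (IntegrableOn.congr_fun (hIoi.const_mul _) hgt.symm measurableSet_Ioi),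
    setIntegral_congr_fun measurableSet_Iic hle, setIntegral_congr_fun measurableSet_Ioi hgt,
    integral_const_mul, integral_const_mul]

noncomputable def stdGaussianCDF (x : ℝ) : ℝ := ∫ t in Iic x, gaussianPDFReal 0 1 t

section StdGaussian

local notation "φ" => gaussianPDFReal 0 1
local notation "Φ" => stdGaussianCDF

lemma stdGaussianPDF_eq (t : ℝ) : φ t = (√(2 * π))⁻¹ * exp (-(t ^ 2) / 2) := by
  simp [gaussianPDFReal]

lemma stdGaussianPDF_neg (t : ℝ) : φ (-t) = φ t := by
  simp [stdGaussianPDF_eq]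

lemma continuous_stdGaussianPDF : Continuous φ := by
  simp only [funext stdGaussianPDF_eq]
  fun_prop

lemma hasDerivAt_stdGaussianPDF (t : ℝ) : HasDerivAt φ (-t * φ t) t := by
  have hexponent : HasDerivAt (fun s : ℝ => -(s ^ 2) / 2) (-t) t :=
    ((hasDerivAt_pow 2 t).fun_neg.div_const 2).congr_deriv (by ring)
  rw [funext stdGaussianPDF_eq]
  exact (hexponent.exp.const_mul _).congr_deriv (by ring)

lemma tendsto_stdGaussianPDF_atTop : Tendsto φ atTop (𝓝 0) := by
  have h : Tendsto (fun t : ℝ => -(t ^ 2) / 2) atTop atBot :=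
    (tendsto_neg_atTop_atBot.comp (tendsto_pow_atTop two_ne_zero)).atBot_div_const two_pos
  simpa [funext stdGaussianPDF_eq] using (tendsto_exp_atBot.comp h).const_mul (√(2 * π))⁻¹

lemma integral_stdGaussianPDF : ∫ t, φ t = 1 := integral_gaussianPDFReal_eq_one 0 one_ne_zero

lemma integral_Ioi_stdGaussianPDF (x : ℝ) : ∫ t in Ioi x, φ t = 1 - Φ x := by
  have h := intervalIntegral.integral_Iic_add_Ioi (b := x)
    (integrable_gaussianPDFReal 0 1).integrableOn (integrable_gaussianPDFReal 0 1).integrableOn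
  rw [integral_stdGaussianPDF] at h
  rw [stdGaussianCDF]
  linarith

lemma stdGaussianCDF_mono : Monotone Φ := fun _ _ hab =>
  setIntegral_mono_set (integrable_gaussianPDFReal 0 1).integrableOn
    (ae_of_all _ (gaussianPDFReal_nonneg 0 1)) (Iic_subset_Iic.2 hab).eventuallyLE

lemma stdGaussianCDF_le_one (x : ℝ) : Φ x ≤ 1 := by
  rw [← sub_nonneg, ← integral_Ioi_stdGaussianPDF]
  exact setIntegral_nonneg measurableSet_Ioi fun t _ => gaussianPDFReal_nonneg 0 1 t

lemma stdGaussianCDF_neg (x : ℝ) : Φ (-x) = 1 - Φ x := by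
  rw [← integral_Ioi_stdGaussianPDF, stdGaussianCDF, ← integral_comp_neg_Ioi]
  simp only [stdGaussianPDF_neg]

lemma hasDerivAt_stdGaussianCDF (x : ℝ) : HasDerivAt Φ (φ x) x := by
  have h : Φ = fun y => Φ 0 + ∫ t in (0 : ℝ)..y, φ t := by
    funext y
    rw [← intervalIntegral.integral_Iic_sub_Iic (integrable_gaussianPDFReal 0 1).integrableOn
      (integrable_gaussianPDFReal 0 1).integrableOn, stdGaussianCDF, stdGaussianCDF]
    ring
  rw [h]
  exact ((continuous_stdGaussianPDF.integral_hasStrictDerivAt 0 x).hasDerivAt).const_add _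

lemma integral_Ioi_mul_stdGaussianPDF {a : ℝ} (ha : 0 ≤ a) :
    IntegrableOn (fun t => t * φ t) (Ioi a) ∧ ∫ t in Ioi a, t * φ t = φ a := by
  have hderiv (t : ℝ) (_ : t ∈ Ici a) : HasDerivAt (fun s => -φ s) (t * φ t) t :=
    (hasDerivAt_stdGaussianPDF t).neg.congr_deriv (by ring)
  have hnonneg (t : ℝ) (ht : t ∈ Ioi a) : 0 ≤ t * φ t :=
    mul_nonneg (ha.trans (le_of_lt ht)) (gaussianPDFReal_nonneg 0 1 t)
  have hlim : Tendsto (fun s => -φ s) atTop (𝓝 0) := by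
    simpa using tendsto_stdGaussianPDF_atTop.neg
  refine ⟨integrableOn_Ioi_deriv_of_nonneg' hderiv hnonneg hlim, ?_⟩
  rw [integral_Ioi_of_hasDerivAt_of_nonneg' hderiv hnonneg hlim]
  ring

lemma mul_one_sub_stdGaussianCDF_le {y : ℝ} (hy : 0 ≤ y) : y * (1 - Φ y) ≤ φ y := by
  obtain ⟨hint, hval⟩ := integral_Ioi_mul_stdGaussianPDF hy
  calc y * (1 - Φ y) = ∫ t in Ioi y, y * φ t := by
        rw [integral_const_mul, integral_Ioi_stdGaussianPDF]
    _ ≤ ∫ t in Ioi y, t * φ t :=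
        setIntegral_mono_on ((integrable_gaussianPDFReal 0 1).const_mul y).integrableOn hint
          measurableSet_Ioi fun t ht =>
            mul_le_mul_of_nonneg_right (le_of_lt ht) (gaussianPDFReal_nonneg 0 1 t)
    _ = φ y := hval

lemma tendsto_mul_one_sub_stdGaussianCDF_atTop :
    Tendsto (fun y => y * (1 - Φ y)) atTop (𝓝 0) := by
  refine tendsto_of_tendsto_of_tendsto_of_le_of_le' tendsto_const_nhds
    tendsto_stdGaussianPDF_atTop ?_ ?_ <;>
    filter_upwards [eventually_ge_atTop 0] with y hy
  · exact mul_nonneg hy (sub_nonneg.2 (stdGaussianCDF_le_one y))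
  · exact mul_one_sub_stdGaussianCDF_le hy

lemma integral_Ioi_one_sub_stdGaussianCDF (a : ℝ) :
    IntegrableOn (fun y => 1 - Φ y) (Ioi a) ∧
      ∫ y in Ioi a, (1 - Φ y) = φ a - a * (1 - Φ a) := by
  have hderiv (y : ℝ) (_ : y ∈ Ici a) :
      HasDerivAt (fun s => s * (1 - Φ s) - φ s) (1 - Φ y) y :=
    (((hasDerivAt_id y).mul ((hasDerivAt_stdGaussianCDF y).const_sub 1)).sub
      (hasDerivAt_stdGaussianPDF y)).congr_deriv (by simp only [id]; ring)
  have hnonneg (y : ℝ) (_ : y ∈ Ioi a) : 0 ≤ 1 - Φ y :=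
    sub_nonneg.2 (stdGaussianCDF_le_one y)
  have hlim : Tendsto (fun s => s * (1 - Φ s) - φ s) atTop (𝓝 0) := by
    simpa using tendsto_mul_one_sub_stdGaussianCDF_atTop.sub tendsto_stdGaussianPDF_atTop
  refine ⟨integrableOn_Ioi_deriv_of_nonneg' hderiv hnonneg hlim, ?_⟩
  rw [integral_Ioi_of_hasDerivAt_of_nonneg' hderiv hnonneg hlim]
  ring

lemma integral_Iic_stdGaussianCDF (a : ℝ) :
    IntegrableOn Φ (Iic a) ∧ ∫ y in Iic a, Φ y = a * Φ a + φ a := by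
  obtain ⟨hint, hval⟩ := integral_Ioi_one_sub_stdGaussianCDF (-a)
  have hrefl := integral_comp_neg_Iic a (fun y => 1 - Φ y)
  simp only [stdGaussianCDF_neg, sub_sub_cancel] at hrefl
  refine ⟨by simpa only [stdGaussianCDF_neg, sub_sub_cancel] using integrableOn_Iic_comp_neg hint,
    ?_⟩
  rw [hrefl, hval, stdGaussianPDF_neg, stdGaussianCDF_neg]
  ring

lemma integral_min_sub_mul_stdGaussianCDF (x : ℝ) :
    ∫ y, (min (Φ x) (Φ y) - Φ x * Φ y) = φ x := by
  rw [integral_min_sub_mul_of_monotone stdGaussianCDF_mono x (integral_Iic_stdGaussianCDF x).1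
    (integral_Ioi_one_sub_stdGaussianCDF x).1, (integral_Iic_stdGaussianCDF x).2,
    (integral_Ioi_one_sub_stdGaussianCDF x).2]
  ring

end StdGaussian

/-- The Hoeffding covariance integral for the upper Fréchet–Hoeffding bound with
standard normal marginals equals 1. -/
theorem frechet_hoeffding_normal_integral
    (Φ : ℝ → ℝ)
    (hΦ : ∀ x : ℝ, Φ x = ∫ t in Set.Iic x, gaussianPDFReal 0 1 t) :
    ∫ x : ℝ, ∫ y : ℝ, (min (Φ x) (Φ y) - Φ x * Φ y) = 1 := by
  obtain rfl : Φ = stdGaussianCDF := funext hΦ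
  simp_rw [integral_min_sub_mul_stdGaussianCDF]
  exact integral_stdGaussianPDF
end
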